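/- Diagonal coefficient identity for the coupled σ-model action (Equation (3.30)). For every r ∈ {1, …, N} and for each choice of sign ±, the quantity c^±_{rr} := ±(ℓ^∞/8) φ^r_±(z_r)² Σ_{i∈I_±} φ_∓(ζ_i) / (φ_±'(ζ_i) (z_r−ζ_i)²) satisfies c^±_{rr} = (ℓ^∞/8) (φ^r_+'(z_r) φ^r_−(z_r) − φ^r_+(z_r) φ^r_−'(z_r)) = ρ_rr/2; in particular c^+_{rr} = c^−_{rr}. -/

import Mathlib

open scoped BigOperators

/-- One of the two "halves" `φ_±(w) = ∏_{i ∈ I} (w - ζ_i) / ∏_r (w - z_r)` of the twist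
function. -/
noncomputable def phiHalf {ι κ : Type*} [Fintype ι] [Fintype κ]
    (z : ι → ℂ) (ζ : κ → ℂ) (I : Finset κ) (w : ℂ) : ℂ :=
  (∏ i ∈ I, (w - ζ i)) / ∏ r, (w - z r)

/-- The function `φ^r_±(w) = (w - z_r) φ_±(w) = ∏_{i ∈ I} (w - ζ_i) / ∏_{s ≠ r} (w - z_s)`. -/
noncomputable def phiHalfR {ι κ : Type*} [Fintype ι] [DecidableEq ι] [Fintype κ]
    (z : ι → ℂ) (ζ : κ → ℂ) (I : Finset κ) (r : ι) (w : ℂ) : ℂ :=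
  (∏ i ∈ I, (w - ζ i)) / ∏ s ∈ Finset.univ.erase r, (w - z s)

/-- The coefficients `ρ_{rs}` of the coupled σ-model action (Equation (3.19)). -/
noncomputable def rhoCoef {ι κ : Type*} [Fintype ι] [DecidableEq ι] [Fintype κ]
    (linf : ℂ) (z : ι → ℂ) (ζ : κ → ℂ) (Ip Im : Finset κ) (r s : ι) : ℂ :=
  if r = s then
    linf / 4 * (deriv (phiHalfR z ζ Ip r) (z r) * phiHalfR z ζ Im r (z r)
      - phiHalfR z ζ Ip r (z r) * deriv (phiHalfR z ζ Im r) (z r))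
  else
    linf / 2 * phiHalfR z ζ Ip r (z r) * phiHalfR z ζ Im s (z s) / (z r - z s)

/-!
Write `P = ∏_{i ∈ I} (X - ζ_i)` and `Q = ∏_{j ∈ J} (X - ζ_j)`. Both are monic of degree `N`, so
`Q - P` has degree `< N` and Lagrange interpolation at the roots of `P` gives
`Q - P = ∑_{i ∈ I} Q(ζ_i) / P'(ζ_i) · P / (X - ζ_i)`. Since the Wronskian of `P / (X - ζ_i)` and
`P` is `(P / (X - ζ_i))²` and `W(P, P) = 0`, the Wronskian `P' Q - P Q'` equals
`∑_{i ∈ I} Q(ζ_i) / P'(ζ_i) · (P / (X - ζ_i))²`; evaluating at `z_r` yields the sum in `c^±_{rr}`.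
The functions `φ^r_±` share the denominator `∏_{s ≠ r} (X - z_s)`, which divides their Wronskian by
its square, and at a root `ζ_i` of `P` the denominator `∏_s (X - z_s)` cancels from
`φ_∓(ζ_i) / φ_±'(ζ_i) = Q(ζ_i) / P'(ζ_i)`. The sign in `c^-_{rr}` is the antisymmetry of the
Wronskian.
-/

open Polynomial Finset

namespace Lagrange

variable {ι : Type*} [DecidableEq ι]

theorem wronskian_nodal_erase_nodal {R : Type*} [CommRing R] {s : Finset ι} {v : ι → R} {i : ι}
    (hi : i ∈ s) : wronskian (nodal (s.erase i) v) (nodal s v) = nodal (s.erase i) v ^ 2 := by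
  rw [wronskian, nodal_eq_mul_nodal_erase hi, derivative_mul, derivative_X_sub_C]
  ring

variable {F : Type*} [Field F] {s t : Finset ι} {v : ι → F}

theorem eq_sum_C_mul_nodal_erase {f : F[X]} (hvs : Set.InjOn v s) (hf : f.degree < #s) :
    f = ∑ i ∈ s, C (f.eval (v i) / (derivative (nodal s v)).eval (v i)) *
      nodal (s.erase i) v := by
  conv_lhs => rw [eq_interpolate hvs hf, interpolate_eq_nodalWeight_mul_nodal_div_X_sub_C]
  refine sum_congr rfl fun i hi => ?_
  rw [← nodal_erase_eq_nodal_div hi, nodalWeight_eq_eval_derivative_nodal hi, div_eq_inv_mul,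
    map_mul]
  ring

theorem wronskian_nodal_eq_sum (hvs : Set.InjOn v s) (hcard : #t = #s) :
    wronskian (nodal t v) (nodal s v) = ∑ i ∈ s,
      C ((nodal t v).eval (v i) / (derivative (nodal s v)).eval (v i)) *
        nodal (s.erase i) v ^ 2 := by
  have hdeg : (nodal t v - nodal s v).degree < #s := by
    simpa [hcard] using degree_sub_lt_left (p := nodal t v) (q := nodal s v) (by simp [hcard])
      nodal_ne_zero (by rw [nodal_monic.leadingCoeff, nodal_monic.leadingCoeff])
  have hsub : wronskian (nodal t v) (nodal s v) =
      wronskian (nodal t v - nodal s v) (nodal s v) := by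
    rw [sub_eq_add_neg, wronskian_add_left, wronskian_neg_left, wronskian_self_eq_zero, neg_zero,
      add_zero]
  rw [hsub, eq_sum_C_mul_nodal_erase hvs hdeg, ← wronskianBilin_apply, LinearMap.map_sum₂]
  refine sum_congr rfl fun i hi => ?_
  rw [C_mul', LinearMap.map_smul₂, wronskianBilin_apply, wronskian_nodal_erase_nodal hi, ← C_mul',
    eval_sub, eval_nodal_at_node hi, sub_zero]

theorem eval_wronskian_nodal {x : F} (hvs : Set.InjOn v s) (hcard : #t = #s)
    (hx : ∀ i ∈ s, x ≠ v i) :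
    (wronskian (nodal t v) (nodal s v)).eval x = (nodal s v).eval x ^ 2 *
      ∑ i ∈ s, (nodal t v).eval (v i) / ((derivative (nodal s v)).eval (v i) * (x - v i) ^ 2) := by
  rw [wronskian_nodal_eq_sum hvs hcard, eval_finsetSum, mul_sum]
  refine sum_congr rfl fun i hi => ?_
  have hxi : x - v i ≠ 0 := sub_ne_zero.mpr (hx i hi)
  have herase : (nodal (s.erase i) v).eval x = (nodal s v).eval x / (x - v i) := by
    rw [eq_div_iff hxi, nodal_eq_mul_nodal_erase hi, eval_mul, eval_sub, eval_X, eval_C, mul_comm]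
  rw [eval_mul, eval_C, eval_pow, herase]
  field_simp

end Lagrange

section RationalDerivative

variable {𝕜 : Type*} [NontriviallyNormedField 𝕜] {x : 𝕜}

theorem deriv_eval_div_eval (p d : 𝕜[X]) (hd : d.eval x ≠ 0) :
    deriv (fun w => p.eval w / d.eval w) x =
      ((derivative p).eval x * d.eval x - p.eval x * (derivative d).eval x) / d.eval x ^ 2 := by
  rw [deriv_fun_div p.differentiableAt d.differentiableAt hd, Polynomial.deriv, Polynomial.deriv]

theorem deriv_eval_div_eval_of_isRoot {p : 𝕜[X]} (d : 𝕜[X]) (hp : p.IsRoot x)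
    (hd : d.eval x ≠ 0) :
    deriv (fun w => p.eval w / d.eval w) x = (derivative p).eval x / d.eval x := by
  rw [deriv_eval_div_eval p d hd, hp.eq_zero, zero_mul, sub_zero, sq, mul_div_mul_right _ _ hd]

theorem deriv_eval_div_eval_mul_sub (p q d : 𝕜[X]) (hd : d.eval x ≠ 0) :
    deriv (fun w => p.eval w / d.eval w) x * (q.eval x / d.eval x) -
        p.eval x / d.eval x * deriv (fun w => q.eval w / d.eval w) x =
      (wronskian q p).eval x / d.eval x ^ 2 := by
  rw [deriv_eval_div_eval p d hd, deriv_eval_div_eval q d hd, wronskian]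
  simp only [eval_sub, eval_mul]
  field_simp
  ring

end RationalDerivative

section Twist

variable {ι κ : Type*} [Fintype ι] [Fintype κ] (z : ι → ℂ) (ζ : κ → ℂ)
  (I J : Finset κ) (r : ι)

theorem phiHalf_eq_eval_div_eval :
    phiHalf z ζ I = fun w => (Lagrange.nodal I ζ).eval w / (Lagrange.nodal univ z).eval w := by
  ext w
  simp only [phiHalf, Lagrange.eval_nodal]

variable [DecidableEq ι]

theorem phiHalfR_eq_eval_div_eval : phiHalfR z ζ I r =
    fun w => (Lagrange.nodal I ζ).eval w / (Lagrange.nodal (univ.erase r) z).eval w := by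
  ext w
  simp only [phiHalfR, Lagrange.eval_nodal]

variable {z ζ I J r}

theorem phiHalfR_sq_mul_sum_eq (hζ : Set.InjOn ζ I) (hcard : #J = #I)
    (hz : ∀ s ≠ r, z s ≠ z r) (hzζ : ∀ s, ∀ i ∈ I, z s ≠ ζ i) :
    phiHalfR z ζ I r (z r) ^ 2 *
        ∑ i ∈ I, phiHalf z ζ J (ζ i) / (deriv (phiHalf z ζ I) (ζ i) * (z r - ζ i) ^ 2) =
      deriv (phiHalfR z ζ I r) (z r) * phiHalfR z ζ J r (z r) -
        phiHalfR z ζ I r (z r) * deriv (phiHalfR z ζ J r) (z r) := by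
  classical
  have hD : (Lagrange.nodal (univ.erase r) z).eval (z r) ≠ 0 :=
    Lagrange.eval_nodal_not_at_node fun s hs => (hz s (mem_erase.mp hs).1).symm
  have hterm : ∀ i ∈ I, phiHalf z ζ J (ζ i) / (deriv (phiHalf z ζ I) (ζ i) * (z r - ζ i) ^ 2) =
      (Lagrange.nodal J ζ).eval (ζ i) /
        ((derivative (Lagrange.nodal I ζ)).eval (ζ i) * (z r - ζ i) ^ 2) := by
    intro i hi
    have hZ : (Lagrange.nodal univ z).eval (ζ i) ≠ 0 :=
      Lagrange.eval_nodal_not_at_node fun s _ => (hzζ s i hi).symm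
    rw [phiHalf_eq_eval_div_eval, phiHalf_eq_eval_div_eval,
      deriv_eval_div_eval_of_isRoot _ (Lagrange.eval_nodal_at_node hi) hZ]
    field_simp
  rw [sum_congr rfl hterm, phiHalfR_eq_eval_div_eval, phiHalfR_eq_eval_div_eval,
    deriv_eval_div_eval_mul_sub _ _ _ hD, Lagrange.eval_wronskian_nodal hζ hcard (hzζ r)]
  beta_reduce
  rw [div_pow, div_mul_eq_mul_div]

end Twist

theorem diagonal_coefficient_identity_general
    {N : ℕ}
    (z : Fin N → ℂ) (ζ : Fin (2 * N) → ℂ)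
    (hdist : Function.Injective (Sum.elim z ζ : Fin N ⊕ Fin (2 * N) → ℂ))
    (Ip Im : Finset (Fin (2 * N)))
    (hIp : Ip.card = N) (hIm : Im.card = N)
    (linf : ℂ)
    (r : Fin N) :
    linf / 8 * phiHalfR z ζ Ip r (z r) ^ 2 *
        ∑ i ∈ Ip, phiHalf z ζ Im (ζ i) /
          (deriv (phiHalf z ζ Ip) (ζ i) * (z r - ζ i) ^ 2)
      = linf / 8 * (deriv (phiHalfR z ζ Ip r) (z r) * phiHalfR z ζ Im r (z r)
          - phiHalfR z ζ Ip r (z r) * deriv (phiHalfR z ζ Im r) (z r)) ∧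
    -(linf / 8) * phiHalfR z ζ Im r (z r) ^ 2 *
        ∑ i ∈ Im, phiHalf z ζ Ip (ζ i) /
          (deriv (phiHalf z ζ Im) (ζ i) * (z r - ζ i) ^ 2)
      = linf / 8 * (deriv (phiHalfR z ζ Ip r) (z r) * phiHalfR z ζ Im r (z r)
          - phiHalfR z ζ Ip r (z r) * deriv (phiHalfR z ζ Im r) (z r)) ∧
    linf / 8 * (deriv (phiHalfR z ζ Ip r) (z r) * phiHalfR z ζ Im r (z r)
          - phiHalfR z ζ Ip r (z r) * deriv (phiHalfR z ζ Im r) (z r))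
      = rhoCoef linf z ζ Ip Im r r / 2 := by
  have hz : Function.Injective z := hdist.comp Sum.inl_injective
  have hζ : Function.Injective ζ := hdist.comp Sum.inr_injective
  have hzζ : ∀ s i, z s ≠ ζ i := fun s i h => Sum.inl_ne_inr (hdist h)
  have hzr : ∀ s ≠ r, z s ≠ z r := fun s hs => hz.ne hs
  refine ⟨?_, ?_, ?_⟩
  · rw [mul_assoc, phiHalfR_sq_mul_sum_eq hζ.injOn (hIm.trans hIp.symm) hzr fun s i _ => hzζ s i]
  · rw [neg_mul, neg_mul, mul_assoc,
      phiHalfR_sq_mul_sum_eq hζ.injOn (hIp.trans hIm.symm) hzr fun s i _ => hzζ s i]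
    ring
  · rw [rhoCoef, if_pos rfl]
    ring

/-- **Diagonal coefficient identity for the coupled σ-model action** (Equation (3.30)):
for every `r` and each choice of sign,
`c^±_{rr} := ±(ℓ^∞/8) φ^r_±(z_r)² Σ_{i∈I_±} φ_∓(ζ_i)/(φ_±'(ζ_i)(z_r-ζ_i)²)`
equals `(ℓ^∞/8)(φ^r_+'(z_r) φ^r_-(z_r) - φ^r_+(z_r) φ^r_-'(z_r)) = ρ_{rr}/2`;
in particular `c^+_{rr} = c^-_{rr}`. -/
theorem diagonal_coefficient_identity
    {N : ℕ} (hN : 1 ≤ N)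
    (z : Fin N → ℂ) (ζ : Fin (2 * N) → ℂ)
    (hdist : Function.Injective (Sum.elim z ζ : Fin N ⊕ Fin (2 * N) → ℂ))
    (Ip Im : Finset (Fin (2 * N)))
    (hdisj : Disjoint Ip Im) (hunion : Ip ∪ Im = Finset.univ)
    (hIp : Ip.card = N) (hIm : Im.card = N)
    (linf : ℂ)
    (r : Fin N) :
    linf / 8 * phiHalfR z ζ Ip r (z r) ^ 2 *
        ∑ i ∈ Ip, phiHalf z ζ Im (ζ i) /
          (deriv (phiHalf z ζ Ip) (ζ i) * (z r - ζ i) ^ 2)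
      = linf / 8 * (deriv (phiHalfR z ζ Ip r) (z r) * phiHalfR z ζ Im r (z r)
          - phiHalfR z ζ Ip r (z r) * deriv (phiHalfR z ζ Im r) (z r)) ∧
    -(linf / 8) * phiHalfR z ζ Im r (z r) ^ 2 *
        ∑ i ∈ Im, phiHalf z ζ Ip (ζ i) /
          (deriv (phiHalf z ζ Im) (ζ i) * (z r - ζ i) ^ 2)
      = linf / 8 * (deriv (phiHalfR z ζ Ip r) (z r) * phiHalfR z ζ Im r (z r)
          - phiHalfR z ζ Ip r (z r) * deriv (phiHalfR z ζ Im r) (z r)) ∧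
    linf / 8 * (deriv (phiHalfR z ζ Ip r) (z r) * phiHalfR z ζ Im r (z r)
          - phiHalfR z ζ Ip r (z r) * deriv (phiHalfR z ζ Im r) (z r))
      = rhoCoef linf z ζ Ip Im r r / 2 :=
  diagonal_coefficient_identity_general z ζ hdist Ip Im hIp hIm linf r
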